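/- Let L be a positive integer and let X = ℝ₊^L be the nonnegative orthant of ℝ^L. Every homothetic preorder ≽ on X has an extension to a complete preorder on X that is homothetic. -/

import Mathlib

/-- The strict part of a binary relation: `x ≻ y` iff `x ≽ y` and not `y ≽ x`. -/
def StrictRel {X : Type*} (R : X → X → Prop) (x y : X) : Prop := R x y ∧ ¬ R y x

/-- `R'` is an extension of `R`. -/
def IsExtension {X : Type*} (R R' : X → X → Prop) : Prop :=
  (∀ x y, R x y → R' x y) ∧ (∀ x y, StrictRel R x y → StrictRel R' x y)

/-- The nonnegative orthant `ℝ₊^L`. -/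
def Orth (L : ℕ) : Type := {x : Fin L → ℝ // ∀ i, 0 ≤ x i}

/-- Scaling a point of the orthant by a nonnegative scalar. -/
def oscale {L : ℕ} (a : ℝ) (ha : 0 ≤ a) (x : Orth L) : Orth L :=
  ⟨fun i => a * x.1 i, fun i => mul_nonneg ha (x.2 i)⟩

/-- A relation on `ℝ₊^L` is homothetic if `x ≽ y ↔ αx ≽ αy` for every real `α > 0`. -/
def Homothetic {L : ℕ} (R : Orth L → Orth L → Prop) : Prop :=
  ∀ (x y : Orth L) (a : ℝ) (ha : 0 < a), R x y ↔ R (oscale a ha.le x) (oscale a ha.le y)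

/-! ### Auxiliary scaling function avoiding dependent proofs -/

def scl {L : ℕ} (a : ℝ) (x : Orth L) : Orth L :=
  oscale (max a 0) (le_max_right a 0) x

lemma scl_eq_oscale {L : ℕ} (a : ℝ) (ha : 0 ≤ a) (x : Orth L) :
    scl a x = oscale a ha x := by
  unfold scl oscale
  apply Subtype.ext
  funext i
  simp [max_eq_left ha]

lemma scl_one {L : ℕ} (x : Orth L) : scl 1 x = x := by
  rw [scl_eq_oscale 1 zero_le_one]
  apply Subtype.ext
  funext i
  simp [oscale]

lemma scl_scl {L : ℕ} (a b : ℝ) (ha : 0 ≤ a) (hb : 0 ≤ b) (x : Orth L) :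
    scl a (scl b x) = scl (a * b) x := by
  rw [scl_eq_oscale a ha, scl_eq_oscale b hb, scl_eq_oscale (a*b) (mul_nonneg ha hb)]
  apply Subtype.ext
  funext i
  simp [oscale]
  ring

lemma scl_cancel {L : ℕ} (a : ℝ) (ha : 0 < a) (x : Orth L) :
    scl a⁻¹ (scl a x) = x := by
  rw [scl_scl _ _ (inv_nonneg.2 ha.le) ha.le, inv_mul_cancel₀ ha.ne', scl_one]

/-! ### The Zorn poset: invariant transitive supersets preserving strict pairs -/

structure GoodS {L : ℕ} (R : Orth L → Orth L → Prop) (S : Set (Orth L × Orth L)) : Prop where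
  hR : ∀ x y, R x y → (x, y) ∈ S
  htr : ∀ a b c, (a, b) ∈ S → (b, c) ∈ S → (a, c) ∈ S
  hsc : ∀ a b (t : ℝ), 0 < t → (a, b) ∈ S → (scl t a, scl t b) ∈ S
  hst : ∀ a b, StrictRel R a b → (b, a) ∉ S

lemma GoodS.refl {L : ℕ} {R : Orth L → Orth L → Prop} {S : Set (Orth L × Orth L)}
    (hG : GoodS R S) (hrefl : Reflexive R) (z : Orth L) : (z, z) ∈ S :=
  hG.hR z z (hrefl z)

/-- Scale a membership back: from `(t•a, t•b) ∈ S` deduce `(a,b) ∈ S`. -/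
lemma GoodS.hsc_inv {L : ℕ} {R : Orth L → Orth L → Prop} {S : Set (Orth L × Orth L)}
    (hG : GoodS R S) (a b : Orth L) (t : ℝ) (ht : 0 < t)
    (h : (scl t a, scl t b) ∈ S) : (a, b) ∈ S := by
  have := hG.hsc _ _ t⁻¹ (inv_pos.2 ht) h
  rwa [scl_cancel t ht, scl_cancel t ht] at this

/-! ### Counted multiplicative chains -/

inductive NT (T : ℝ → Prop) : ℝ → ℕ → Prop
  | one : NT T 1 0
  | step {t r : ℝ} {n : ℕ} : T t → NT T r n → NT T (t * r) (n + 1)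

/-- The set of link ratios for the pair `(p, q)`: `t` such that `q ≼ t•p`. -/
def Tset {L : ℕ} (S : Set (Orth L × Orth L)) (p q : Orth L) (t : ℝ) : Prop :=
  0 < t ∧ (q, scl t p) ∈ S

lemma NT_pos {T : ℝ → Prop} (hT : ∀ t, T t → 0 < t) {r : ℝ} {n : ℕ}
    (h : NT T r n) : 0 < r := by
  induction h with
  | one => exact one_pos
  | step ht _ ih => exact mul_pos (hT _ ht) ih

lemma NT_mul {T : ℝ → Prop} {r s : ℝ} {n m : ℕ}
    (h1 : NT T r n) (h2 : NT T s m) : NT T (r * s) (n + m) := by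
  induction h1 with
  | one => simpa using h2
  | @step t r' n' ht _ ih =>
      have := NT.step ht ih
      rw [← mul_assoc] at this
      rwa [show n' + 1 + m = n' + m + 1 from by omega]

lemma NT_one_pow {T : ℝ → Prop} {K : ℕ} (h : NT T 1 K) (i : ℕ) : NT T 1 (K * i) := by
  induction i with
  | zero => simpa using NT.one
  | succ j ih =>
      have := NT_mul ih h
      rw [one_mul] at this
      rwa [show K * j + K = K * (j + 1) from by ring] at this

/-- Key mixing lemma: alternating `n+1` links of type `x ≼ u•y` with `n` links of
type `y ≼ t•x` yields `x ≼ (s*r)•y`. -/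
lemma claimC {L : ℕ} {R : Orth L → Orth L → Prop} {S : Set (Orth L × Orth L)}
    (hG : GoodS R S) (p q : Orth L) :
    ∀ (n : ℕ) (s r : ℝ), NT (Tset S q p) s (n + 1) → NT (Tset S p q) r n →
      (p, scl (s * r) q) ∈ S := by
  intro n
  induction n with
  | zero =>
      intro s r h1 h2
      cases h2
      cases h1 with
      | step hu h0 =>
          cases h0
          simpa using hu.2
  | succ n ih =>
      intro s r h1 h2
      cases h1 with
      | @step u s0 _ hu h1' =>
          cases h2 with
          | @step t r0 _ ht h2' =>
              have hupos : 0 < u := hu.1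
              have htpos : 0 < t := ht.1
              have hs0 : 0 < s0 := NT_pos (fun _ h => h.1) h1'
              have hr0 : 0 < r0 := NT_pos (fun _ h => h.1) h2'
              have hI : (p, scl (s0 * r0) q) ∈ S := ih s0 r0 h1' h2'
              -- p ≼ u•q
              have h1m : (p, scl u q) ∈ S := hu.2
              -- u•q ≼ (u*t)•p
              have h2m : (scl u q, scl (u * t) p) ∈ S := by
                have := hG.hsc _ _ u hupos ht.2
                rwa [scl_scl u t hupos.le htpos.le] at this
              -- (u*t)•p ≼ (u*t*(s0*r0))•q
              have h3m : (scl (u * t) p, scl (u * t * (s0 * r0)) q) ∈ S := by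
                have := hG.hsc _ _ (u * t) (mul_pos hupos htpos) hI
                rwa [scl_scl (u * t) (s0 * r0) (mul_pos hupos htpos).le
                  (mul_pos hs0 hr0).le] at this
              have := hG.htr _ _ _ (hG.htr _ _ _ h1m h2m) h3m
              rwa [show u * t * (s0 * r0) = u * s0 * (t * r0) from by ring] at this

/-- One step of the extended relation: either `S`, or a scaled copy of the new pair. -/
def DStep {L : ℕ} (S : Set (Orth L × Orth L)) (p q : Orth L) (u v : Orth L) : Prop :=
  (u, v) ∈ S ∨ ∃ α : ℝ, 0 < α ∧ u = scl α p ∧ v = scl α q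

lemma DStep_hom {L : ℕ} {R : Orth L → Orth L → Prop} {S : Set (Orth L × Orth L)}
    (hG : GoodS R S) (p q : Orth L) (t : ℝ) (ht : 0 < t) {u v : Orth L}
    (h : DStep S p q u v) : DStep S p q (scl t u) (scl t v) := by
  rcases h with h | ⟨α, hα, rfl, rfl⟩
  · exact Or.inl (hG.hsc _ _ t ht h)
  · exact Or.inr ⟨t * α, mul_pos ht hα, (scl_scl t α ht.le hα.le p).symm ▸ rfl,
      (scl_scl t α ht.le hα.le q).symm ▸ rfl⟩

lemma ERel_hom {L : ℕ} {R : Orth L → Orth L → Prop} {S : Set (Orth L × Orth L)}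
    (hG : GoodS R S) (p q : Orth L) (t : ℝ) (ht : 0 < t) {a b : Orth L}
    (h : Relation.TransGen (DStep S p q) a b) :
    Relation.TransGen (DStep S p q) (scl t a) (scl t b) := by
  induction h with
  | single h => exact Relation.TransGen.single (DStep_hom hG p q t ht h)
  | tail _ hstep ih => exact ih.tail (DStep_hom hG p q t ht hstep)

/-- Decomposition of a transitive chain through the added orbit. -/
lemma decomp {L : ℕ} {R : Orth L → Orth L → Prop} {S : Set (Orth L × Orth L)}
    (hG : GoodS R S) (hrefl : Reflexive R) (p q a b : Orth L)
    (h : Relation.TransGen (DStep S p q) a b) :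
    (a, b) ∈ S ∨ ∃ (α β r : ℝ) (n : ℕ), 0 < α ∧ 0 < β ∧ (a, scl α p) ∈ S ∧
      (scl β q, b) ∈ S ∧ NT (Tset S p q) r n ∧ β = r * α := by
  induction h with
  | single h =>
      rcases h with h | ⟨α, hα, rfl, rfl⟩
      · exact Or.inl h
      · exact Or.inr ⟨α, α, 1, 0, hα, hα, hG.refl hrefl _, hG.refl hrefl _, NT.one,
          (one_mul α).symm⟩
  | tail _ hstep ih =>
      rcases hstep with hcb | ⟨γ, hγ, rfl, rfl⟩
      · rcases ih with hac | ⟨α, β, r, n, hα, hβ, h1, h2, hNT, hβeq⟩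
        · exact Or.inl (hG.htr _ _ _ hac hcb)
        · exact Or.inr ⟨α, β, r, n, hα, hβ, h1, hG.htr _ _ _ h2 hcb, hNT, hβeq⟩
      · rcases ih with hac | ⟨α, β, r, n, hα, hβ, h1, h2, hNT, hβeq⟩
        · exact Or.inr ⟨γ, γ, 1, 0, hγ, hγ, hac, hG.refl hrefl _, NT.one, (one_mul γ).symm⟩
        · -- h2 : (scl β q, scl γ p) ∈ S ; produce the link t = γ * β⁻¹
          have hβne : β ≠ 0 := hβ.ne'
          have htpos : 0 < γ * β⁻¹ := mul_pos hγ (inv_pos.2 hβ)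
          have hlink : (q, scl (γ * β⁻¹) p) ∈ S := by
            have := hG.hsc _ _ β⁻¹ (inv_pos.2 hβ) h2
            rwa [scl_cancel β hβ, scl_scl β⁻¹ γ (inv_pos.2 hβ).le hγ.le,
              mul_comm β⁻¹ γ] at this
          refine Or.inr ⟨α, γ, γ * β⁻¹ * r, n + 1, hα, hγ, h1, hG.refl hrefl _,
            NT.step ⟨htpos, hlink⟩ hNT, ?_⟩
          calc γ = γ * β⁻¹ * β := by field_simp
          _ = γ * β⁻¹ * (r * α) := by rw [← hβeq]
          _ = γ * β⁻¹ * r * α := by ring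

/-- From a failure of strictness preservation after adding the orbit of `(p,q)`,
extract a counted cycle: `NT (Tset S p q) 1 M` with `M ≥ 1`. -/
lemma fail_one {L : ℕ} {R : Orth L → Orth L → Prop} {S : Set (Orth L × Orth L)}
    (hG : GoodS R S) (hrefl : Reflexive R) (p q a b : Orth L)
    (hstrict : StrictRel R a b) (hE : Relation.TransGen (DStep S p q) b a) :
    ∃ M : ℕ, 1 ≤ M ∧ NT (Tset S p q) 1 M := by
  rcases decomp hG hrefl p q b a hE with hba | ⟨α, β, r, n, hα, hβ, h1, h2, hNT, hβeq⟩
  · exact absurd hba (hG.hst a b hstrict)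
  · have hab : (a, b) ∈ S := hG.hR a b hstrict.1
    have hchain : (scl β q, scl α p) ∈ S := hG.htr _ _ _ (hG.htr _ _ _ h2 hab) h1
    have hβinv : 0 < β⁻¹ := inv_pos.2 hβ
    have hlink : (q, scl (α * β⁻¹) p) ∈ S := by
      have := hG.hsc _ _ β⁻¹ hβinv hchain
      rwa [scl_cancel β hβ, scl_scl β⁻¹ α hβinv.le hα.le, mul_comm β⁻¹ α] at this
    have hr : 0 < r := NT_pos (fun _ h => h.1) hNT
    have hstep := NT.step (t := α * β⁻¹) ⟨mul_pos hα hβinv, hlink⟩ hNT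
    have heq : α * β⁻¹ * r = 1 := by
      rw [hβeq]; field_simp
    rw [heq] at hstep
    exact ⟨n + 1, Nat.le_add_left 1 n, hstep⟩

/-- Adding the orbit of `(x,y)` and of `(y,x)` cannot both fail. -/
lemma no_both_fail {L : ℕ} {R : Orth L → Orth L → Prop} {S : Set (Orth L × Orth L)}
    (hG : GoodS R S) (hrefl : Reflexive R) (x y : Orth L)
    (hf1 : ∃ a b, StrictRel R a b ∧ Relation.TransGen (DStep S x y) b a)
    (hf2 : ∃ c d, StrictRel R c d ∧ Relation.TransGen (DStep S y x) d c) : False := by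
  obtain ⟨a, b, hst1, hE1⟩ := hf1
  have hMex : ∃ M : ℕ, 1 ≤ M ∧ NT (Tset S y x) 1 M := by
    obtain ⟨c, d, hst2, hE2⟩ := hf2
    exact fail_one hG hrefl y x c d hst2 hE2
  obtain ⟨M, hM1, hNTU⟩ := hMex
  rcases decomp hG hrefl x y b a hE1 with hba | ⟨α, β, r, k, hα, hβ, h1, h2, hNT, hβeq⟩
  · exact absurd hba (hG.hst a b hst1)
  · have hr : 0 < r := NT_pos (fun _ h => h.1) hNT
    have hα' : α ≠ 0 := hα.ne'
    have hr' : r ≠ 0 := hr.ne'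
    -- the cycle for orientation (x,y), with count exactly k+1
    have hNTK : NT (Tset S x y) 1 (k + 1) := by
      have hab : (a, b) ∈ S := hG.hR a b hst1.1
      have hchain : (scl β y, scl α x) ∈ S := hG.htr _ _ _ (hG.htr _ _ _ h2 hab) h1
      have hβinv : 0 < β⁻¹ := inv_pos.2 hβ
      have hlink : (y, scl (α * β⁻¹) x) ∈ S := by
        have := hG.hsc _ _ β⁻¹ hβinv hchain
        rwa [scl_cancel β hβ, scl_scl β⁻¹ α hβinv.le hα.le, mul_comm β⁻¹ α] at this
      have hstep := NT.step (t := α * β⁻¹) ⟨mul_pos hα hβinv, hlink⟩ hNT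
      have heq : α * β⁻¹ * r = 1 := by
        rw [hβeq]
        field_simp
      rwa [heq] at hstep
    obtain ⟨M', rfl⟩ : ∃ M', M = M' + 1 := ⟨M - 1, by omega⟩
    -- T-chain of count n := k + (k+1)*M' with product r
    have hT : NT (Tset S x y) r (k + (k + 1) * M') := by
      have := NT_mul hNT (NT_one_pow hNTK M')
      rwa [mul_one] at this
    -- U-chain of count n+1 with product 1
    have hU : NT (Tset S y x) 1 (k + (k + 1) * M' + 1) := by
      have := NT_one_pow hNTU (k + 1)
      rwa [show (M' + 1) * (k + 1) = k + (k + 1) * M' + 1 from by ring] at this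
    have hxy : (x, scl (1 * r) y) ∈ S := claimC hG x y _ 1 r hU hT
    rw [one_mul] at hxy
    have h3 : (scl α x, scl β y) ∈ S := by
      have := hG.hsc _ _ α hα hxy
      rwa [scl_scl α r hα.le hr.le, mul_comm α r, ← hβeq] at this
    exact absurd (hG.htr _ _ _ (hG.htr _ _ _ h1 h3) h2) (hG.hst a b hst1)

/-- Every homothetic preorder on `ℝ₊^L` extends to a homothetic complete preorder. -/
theorem homothetic_preorder_extension (L : ℕ) (hL : 0 < L)
    (R : Orth L → Orth L → Prop) (hrefl : Reflexive R) (htrans : Transitive R)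
    (hhom : Homothetic R) :
    ∃ R' : Orth L → Orth L → Prop, IsExtension R R' ∧ Reflexive R' ∧ Transitive R' ∧
      (∀ x y, R' x y ∨ R' y x) ∧ Homothetic R' := by
  classical
  set 𝒮 : Set (Set (Orth L × Orth L)) := {S | GoodS R S} with h𝒮
  -- the base element
  have h₀ : {z : Orth L × Orth L | R z.1 z.2} ∈ 𝒮 := by
    refine ⟨fun a b h => h, fun a b c h1 h2 => htrans h1 h2, ?_, fun a b h => h.2⟩
    intro a b t ht h
    have := (hhom a b t ht).mp h
    rwa [Set.mem_setOf_eq, scl_eq_oscale t ht.le, scl_eq_oscale t ht.le]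
  -- Zorn
  obtain ⟨S, hRS, hSmem, hmax⟩ : ∃ S, {z : Orth L × Orth L | R z.1 z.2} ⊆ S ∧
      S ∈ 𝒮 ∧ ∀ T ∈ 𝒮, S ⊆ T → T ⊆ S := by
    have H : ∀ c ⊆ 𝒮, IsChain (· ⊆ ·) c → c.Nonempty → ∃ ub ∈ 𝒮, ∀ s ∈ c, s ⊆ ub := by
      intro c hc hchain hne
      refine ⟨⋃₀ c, ⟨?_, ?_, ?_, ?_⟩, fun s hs => Set.subset_sUnion_of_mem hs⟩
      · obtain ⟨s, hs⟩ := hne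
        exact fun a b h => Set.mem_sUnion.2 ⟨s, hs, (hc hs).hR a b h⟩
      · rintro a b c' ⟨s1, hs1, h1⟩ ⟨s2, hs2, h2⟩
        rcases hchain.total hs1 hs2 with h | h
        · exact ⟨s2, hs2, (hc hs2).htr a b c' (h h1) h2⟩
        · exact ⟨s1, hs1, (hc hs1).htr a b c' h1 (h h2)⟩
      · rintro a b t ht ⟨s, hs, h⟩
        exact ⟨s, hs, (hc hs).hsc a b t ht h⟩
      · rintro a b hab ⟨s, hs, h⟩
        exact (hc hs).hst a b hab h
    obtain ⟨S, h1, h2⟩ := zorn_subset_nonempty 𝒮 H _ h₀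
    exact ⟨S, h1, h2.1, fun T hT hST => h2.2 hT hST⟩
  have hG : GoodS R S := hSmem
  -- maximal element is total
  have htot : ∀ x y : Orth L, (x, y) ∈ S ∨ (y, x) ∈ S := by
    intro x y
    by_contra hxy
    push_neg at hxy
    -- if adding the orbit of (p,q) preserves strictness, the closure is in 𝒮
    have hclosure : ∀ p q : Orth L,
        (¬ ∃ a b, StrictRel R a b ∧ Relation.TransGen (DStep S p q) b a) →
        (p, q) ∈ S := by
      intro p q hnf
      have hmem : {z : Orth L × Orth L | Relation.TransGen (DStep S p q) z.1 z.2} ∈ 𝒮 := by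
        refine ⟨fun a b h => Relation.TransGen.single (Or.inl (hG.hR a b h)),
          fun a b c h1 h2 => Relation.TransGen.trans h1 h2,
          fun a b t ht h => ERel_hom hG p q t ht h, ?_⟩
        intro a b hab h
        exact hnf ⟨a, b, hab, h⟩
      have hsub : S ⊆ {z : Orth L × Orth L | Relation.TransGen (DStep S p q) z.1 z.2} :=
        fun z hz => Relation.TransGen.single (Or.inl hz)
      have := hmax _ hmem hsub
      exact this (Relation.TransGen.single
        (Or.inr ⟨1, one_pos, (scl_one p).symm, (scl_one q).symm⟩))
    have hf1 : ∃ a b, StrictRel R a b ∧ Relation.TransGen (DStep S x y) b a := by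
      by_contra h; exact hxy.1 (hclosure x y h)
    have hf2 : ∃ a b, StrictRel R a b ∧ Relation.TransGen (DStep S y x) b a := by
      by_contra h; exact hxy.2 (hclosure y x h)
    exact no_both_fail hG hrefl x y hf1 hf2
  -- assemble
  refine ⟨fun u v => (u, v) ∈ S, ⟨fun u v h => hG.hR u v h,
    fun u v h => ⟨hG.hR u v h.1, hG.hst u v h⟩⟩,
    fun z => hG.refl hrefl z, fun a b c h1 h2 => hG.htr a b c h1 h2, htot, ?_⟩
  intro u v t ht
  constructor
  · intro h
    have := hG.hsc u v t ht h
    rwa [scl_eq_oscale t ht.le, scl_eq_oscale t ht.le] at this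
  · intro h
    refine hG.hsc_inv u v t ht ?_
    rwa [scl_eq_oscale t ht.le, scl_eq_oscale t ht.le]
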